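/- For every b ≥ 0 and every continuously differentiable compactly supported function ψ on [b,∞), setting φ(t) = √(cosh t) ψ(t), one has ∫_b^∞ |ψ'(t)|² cosh(t) dt = ∫_b^∞ |φ'(t)|² dt + (tanh(b)/2)|φ(b)|² + (1/4)∫_b^∞ (1 + 1/cosh²(t)) |φ(t)|² dt. -/

import Mathlib

open Real MeasureTheory Set

/-! With `φ = √ρ • ψ` one has `φ' = (ρ' / (2√ρ)) • ψ + √ρ • ψ'`, hence pointwise
`ρ ‖ψ'‖² = ‖φ'‖² - ρ'² / (4ρ) ‖ψ‖² - ρ' ⟪ψ, ψ'⟫`. The cross term is `(ρ'/2) (‖ψ‖²)'`, and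
integrating `((ρ'/2) ‖ψ‖²)'` over `(b, ∞)` turns it into the boundary term `ρ'(b)/2 ‖ψ(b)‖²`
plus the potential `ρ''/2 ‖ψ‖²`. For `ρ = cosh` the potential `ρ''/2 - ρ'² / (4ρ)` is
`(1 + 1/cosh²) cosh / 4`, and `ρ'(b)/2 = tanh b / 2 · cosh b`. -/

open scoped RealInnerProductSpace

lemma Continuous.integrableOn_of_support_subset {β : Type*} [Zero β] {f : ℝ → ℝ} {g : ℝ → β}
    (hf : Continuous f) (hg : HasCompactSupport g) (hfg : Function.support f ⊆ Function.support g) (s : Set ℝ) :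
    IntegrableOn f s :=
  (hf.integrable_of_hasCompactSupport (hg.mono hfg)).integrableOn

variable {E : Type*} [NormedAddCommGroup E] [InnerProductSpace ℝ E]

lemma norm_sqrt_smul_sq {r : ℝ} (hr : 0 ≤ r) (u : E) : ‖√r • u‖ ^ 2 = r * ‖u‖ ^ 2 := by
  rw [norm_smul, mul_pow, norm_of_nonneg (sqrt_nonneg r), sq_sqrt hr]

lemma mul_norm_sq_eq_norm_add_sq {r : ℝ} (hr : 0 < r) (r' : ℝ) (u u' : E) :
    r * ‖u'‖ ^ 2 = ‖(r' / (2 * √r)) • u + √r • u'‖ ^ 2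
      - r' ^ 2 / (4 * r) * ‖u‖ ^ 2 - r' * ⟪u, u'⟫ := by
  have hsqrt : 0 < √r := sqrt_pos.mpr hr
  rw [norm_add_sq_real, norm_sqrt_smul_sq hr.le, norm_smul, inner_smul_left, inner_smul_right,
    conj_trivial, mul_pow, norm_eq_abs, sq_abs, div_pow, mul_pow, sq_sqrt hr.le]
  field_simp
  ring

theorem integral_Ioi_norm_deriv_sq_mul_eq {ρ : ℝ → ℝ} (hρ : ContDiff ℝ 2 ρ)
    (hρ_pos : ∀ t, 0 < ρ t) {ψ : ℝ → E} (hψ : ContDiff ℝ 1 ψ) (hsupp : HasCompactSupport ψ)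
    (b : ℝ) :
    ∫ t in Ioi b, ‖deriv ψ t‖ ^ 2 * ρ t
      = (∫ t in Ioi b, ‖deriv (fun s => √(ρ s) • ψ s) t‖ ^ 2)
        + deriv ρ b / 2 * ‖ψ b‖ ^ 2
        + ∫ t in Ioi b, (deriv (deriv ρ) t / 2 - deriv ρ t ^ 2 / (4 * ρ t)) * ‖ψ t‖ ^ 2 := by
  set φ : ℝ → E := fun s => √(ρ s) • ψ s
  set G : ℝ → ℝ := fun t => deriv ρ t / 2 * ‖ψ t‖ ^ 2
  set V : ℝ → ℝ := fun t => deriv (deriv ρ) t / 2 - deriv ρ t ^ 2 / (4 * ρ t)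
  obtain ⟨hρ_diff, -, hρ'⟩ := (contDiff_succ_iff_deriv (n := 1)).mp hρ
  have hψ_deriv (t : ℝ) : HasDerivAt ψ (deriv ψ t) t :=
    (hψ.differentiable one_ne_zero t).hasDerivAt
  have hφ (t : ℝ) : deriv φ t = (deriv ρ t / (2 * √(ρ t))) • ψ t + √(ρ t) • deriv ψ t :=
    (((hρ_diff t).hasDerivAt.sqrt (hρ_pos t).ne').smul (hψ_deriv t)).deriv.trans (add_comm _ _)
  have hG (t : ℝ) :
      deriv G t = deriv (deriv ρ) t / 2 * ‖ψ t‖ ^ 2 + deriv ρ t * ⟪ψ t, deriv ψ t⟫ := by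
    have : HasDerivAt G _ t :=
      (((hρ'.differentiable one_ne_zero) t).hasDerivAt.div_const 2).mul (hψ_deriv t).norm_sq
    rw [this.deriv]
    ring
  have key (t : ℝ) : ‖deriv ψ t‖ ^ 2 * ρ t + deriv G t = ‖deriv φ t‖ ^ 2 + V t * ‖ψ t‖ ^ 2 := by
    rw [hφ, hG, mul_comm, mul_norm_sq_eq_norm_add_sq (hρ_pos t) (deriv ρ t)]
    ring
  have hG_C1 : ContDiff ℝ 1 G := (hρ'.div_const 2).mul (hψ.norm_sq ℝ)
  have hG_supp : HasCompactSupport G :=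
    (hsupp.comp_left (g := (‖·‖ ^ 2)) (by simp)).mul_left
  have hφ_C1 : ContDiff ℝ 1 φ := ((hρ.of_le one_le_two).sqrt fun t => (hρ_pos t).ne').smul hψ
  have hφ_supp : HasCompactSupport φ := hsupp.smul_left
  have hV : Continuous V := ((hρ'.continuous_deriv le_rfl).div_const 2).sub
    ((hρ'.continuous.pow 2).div (continuous_const.mul hρ.continuous)
      fun t => by have := hρ_pos t; positivity)
  have int_ψ' : IntegrableOn (fun t => ‖deriv ψ t‖ ^ 2 * ρ t) (Ioi b) :=
    ((hψ.continuous_deriv le_rfl).norm.pow 2 |>.mul hρ.continuous)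
      |>.integrableOn_of_support_subset hsupp.deriv (fun t ht h => ht (by simp [h])) _
  have int_G' : IntegrableOn (deriv G) (Ioi b) :=
    (hG_C1.continuous_deriv le_rfl).integrableOn_of_support_subset hG_supp.deriv subset_rfl _
  have int_φ' : IntegrableOn (fun t => ‖deriv φ t‖ ^ 2) (Ioi b) :=
    ((hφ_C1.continuous_deriv le_rfl).norm.pow 2)
      |>.integrableOn_of_support_subset hφ_supp.deriv (fun t ht h => ht (by simp [h])) _
  have int_V : IntegrableOn (fun t => V t * ‖ψ t‖ ^ 2) (Ioi b) :=
    (hV.mul (hψ.continuous.norm.pow 2)).integrableOn_of_support_subset hsupp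
      (fun t ht h => ht (by simp [h])) _
  have h : ∫ t in Ioi b, ‖deriv ψ t‖ ^ 2 * ρ t + deriv G t
      = ∫ t in Ioi b, ‖deriv φ t‖ ^ 2 + V t * ‖ψ t‖ ^ 2 :=
    integral_congr_ae (ae_of_all _ key)
  rw [integral_add int_ψ' int_G', integral_add int_φ' int_V,
    hG_supp.integral_Ioi_deriv_eq hG_C1 b] at h
  simp only [G, V] at h
  linarith

theorem stmt7_general (b : ℝ) (ψ : ℝ → ℂ) (hψ : ContDiff ℝ 1 ψ)
    (hsupp : HasCompactSupport ψ) (φ : ℝ → ℂ)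
    (hφ : φ = fun t => (Real.sqrt (Real.cosh t) : ℂ) * ψ t) :
    (∫ t in Ioi b, ‖deriv ψ t‖ ^ 2 * Real.cosh t)
        = (∫ t in Ioi b, ‖deriv φ t‖ ^ 2)
          + (Real.tanh b / 2) * ‖φ b‖ ^ 2
          + (1 / 4) * (∫ t in Ioi b,
              (1 + 1 / (Real.cosh t) ^ 2) * ‖φ t‖ ^ 2) := by
  have hφ_smul : φ = fun t => √(cosh t) • ψ t := by simp only [hφ, Complex.real_smul]
  have hφ_norm (t : ℝ) : ‖φ t‖ ^ 2 = cosh t * ‖ψ t‖ ^ 2 := by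
    rw [hφ_smul, norm_sqrt_smul_sq (cosh_pos t).le]
  rw [integral_Ioi_norm_deriv_sq_mul_eq contDiff_cosh cosh_pos hψ hsupp b, ← hφ_smul,
    Real.deriv_cosh, Real.deriv_sinh, ← integral_const_mul, hφ_norm, tanh_eq_sinh_div_cosh]
  congr 1
  · field_simp [(cosh_pos b).ne']
  · refine integral_congr_ae (ae_of_all _ fun t => ?_)
    simp only [hφ_norm, sinh_sq]
    field_simp [(cosh_pos t).ne']
    ring

/-- The substitution `φ(t) = √(cosh t) ψ(t)` identity for the weight `cosh t`. -/
theorem stmt7 (b : ℝ) (hb : 0 ≤ b) (ψ : ℝ → ℂ) (hψ : ContDiff ℝ 1 ψ)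
    (hsupp : HasCompactSupport ψ) (φ : ℝ → ℂ)
    (hφ : φ = fun t => (Real.sqrt (Real.cosh t) : ℂ) * ψ t) :
    (∫ t in Ioi b, ‖deriv ψ t‖ ^ 2 * Real.cosh t)
        = (∫ t in Ioi b, ‖deriv φ t‖ ^ 2)
          + (Real.tanh b / 2) * ‖φ b‖ ^ 2
          + (1 / 4) * (∫ t in Ioi b,
              (1 + 1 / (Real.cosh t) ^ 2) * ‖φ t‖ ^ 2) :=
  stmt7_general b ψ hψ hsupp φ hφ
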